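/- Let C be a Möbius category, A a commutative ring, and suppose every chain of composable non-isomorphisms in C has length at most n. Then any η ∈ A⟦C⟧ with η(f) = 0 for all isomorphisms f satisfies η^{*(n+1)} = 0, i.e. the (n+1)-fold convolution power of η vanishes. Consequently, every μ ∈ A⟦C⟧ with μ = δ + η, η vanishing on isomorphisms, is convolution-invertible with inverse Σ_{k=0}^{n} (−1)^k η^{*k}. -/

import Mathlib

open CategoryTheory

/-- A *Möbius category* is a small category `C` such that for every morphism `f : x ⟶ y`,
the category `Factorisation f` of factorizations `x → z → y` of `f` is equivalent to a
finite partially ordered set. -/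
def IsMobiusCategory (C : Type*) [Category C] : Prop :=
  ∀ ⦃x y : C⦄ (f : x ⟶ y), ∃ P : FinPartOrd.{0}, Nonempty (Factorisation f ≌ ↥P)

/-- A function on the morphisms of `C` descends to isomorphism classes of morphisms
(objects of the arrow category) iff it is invariant under isomorphisms of arrows.
Such invariant functions are exactly the elements of the Möbius algebra `A⟦C⟧`. -/
def ArrowInvariant {C : Type*} [Category C] {A : Type*}
    (μ : ∀ ⦃x y : C⦄, (x ⟶ y) → A) : Prop :=
  ∀ ⦃x y x' y' : C⦄ (f : x ⟶ y) (f' : x' ⟶ y') (ex : x ≅ x') (ey : y ≅ y'),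
    f ≫ ey.hom = ex.hom ≫ f' → μ f = μ f'

/-- Isomorphism relation on the factorization category `C_f`. -/
def FactIsoRel {C : Type*} [Category C] {x y : C} (f : x ⟶ y) :
    Factorisation f → Factorisation f → Prop :=
  fun F G => Nonempty (F ≅ G)

/-- The Möbius convolution `(μ * ν)(f) = ∑_{f = h ∘ g} μ(g) · ν(h)`, the sum running over the
isomorphism classes of factorizations of `f` (the elements of the poset `C_f`); for each class
a representative is chosen by `Quot.out`. -/
noncomputable def mobiusConv {C : Type*} [Category C] {A : Type*} [CommRing A]
    (μ ν : ∀ ⦃x y : C⦄, (x ⟶ y) → A) : ∀ ⦃x y : C⦄, (x ⟶ y) → A :=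
  fun _ _ f => ∑ᶠ q : Quot (FactIsoRel f), μ (Quot.out q).ι * ν (Quot.out q).π

open Classical in
/-- The convolution unit `δ`, taking value `1` on isomorphisms and `0` otherwise. -/
noncomputable def mobiusDelta (C : Type*) [Category C] (A : Type*) [CommRing A] :
    ∀ ⦃x y : C⦄, (x ⟶ y) → A :=
  fun _ _ f => if IsIso f then 1 else 0

/-- The `i`-th elementary step of a chain `F : Fin (n+1) ⥤ C`. -/
def chainStep {C : Type*} [Category C] {n : ℕ} (F : Fin (n + 1) ⥤ C) (i : Fin n) :
    F.obj i.castSucc ⟶ F.obj i.succ :=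
  F.map (homOfLE (Fin.castSucc_le_succ i))

/-- Iterated Möbius convolution powers: `μ^{*0} = δ` and `μ^{*(k+1)} = μ * μ^{*k}`. -/
noncomputable def mobiusConvPow {C : Type*} [Category C] {A : Type*} [CommRing A]
    (μ : ∀ ⦃x y : C⦄, (x ⟶ y) → A) : ℕ → ∀ ⦃x y : C⦄, (x ⟶ y) → A
  | 0 => mobiusDelta C A
  | k + 1 => mobiusConv μ (mobiusConvPow μ k)

set_option linter.unusedSectionVars false

section Lemmas
variable {C : Type*} [Category C] {x y : C} {f : x ⟶ y}

theorem factIsoRel_equivalence : Equivalence (FactIsoRel f) :=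
  ⟨fun F => ⟨Iso.refl F⟩, fun ⟨e⟩ => ⟨e.symm⟩, fun ⟨e⟩ ⟨e'⟩ => ⟨e.trans e'⟩⟩

theorem factIsoRel_mk_eq {F G : Factorisation f} :
    Quot.mk (FactIsoRel f) F = Quot.mk (FactIsoRel f) G ↔ FactIsoRel f F G := by
  rw [Quot.eq]
  exact (factIsoRel_equivalence (f := f)).eqvGen_iff

theorem factIsoRel_out_mk (F : Factorisation f) :
    FactIsoRel f (Quot.out (Quot.mk (FactIsoRel f) F)) F := by
  rw [← factIsoRel_mk_eq, Quot.out_eq]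

theorem mobius_hom_subsingleton (hC : IsMobiusCategory C) (F G : Factorisation f) :
    Subsingleton (F ⟶ G) := by
  obtain ⟨P, ⟨e⟩⟩ := hC f
  constructor
  intro a b
  have := e.functor.map_injective (X := F) (Y := G)
  exact this (Subsingleton.elim _ _)

theorem mobius_finite_quot (hC : IsMobiusCategory C) :
    Finite (Quot (FactIsoRel f)) := by
  obtain ⟨P, ⟨e⟩⟩ := hC f
  have : Function.Surjective (fun p : ↥P => Quot.mk (FactIsoRel f) (e.inverse.obj p)) := by
    intro q
    refine ⟨e.functor.obj q.out, ?_⟩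
    have : FactIsoRel f (e.inverse.obj (e.functor.obj q.out)) q.out := ⟨e.unitIso.symm.app _⟩
    simp only [factIsoRel_mk_eq.mpr this, Quot.out_eq]
  exact Finite.of_surjective _ this

theorem factIsoRel_of_homs (hC : IsMobiusCategory C) {F G : Factorisation f}
    (a : F ⟶ G) (b : G ⟶ F) : FactIsoRel f F G := by
  have h1 := mobius_hom_subsingleton hC F F
  have h2 := mobius_hom_subsingleton hC G G
  exact ⟨⟨a, b, Subsingleton.elim _ _, Subsingleton.elim _ _⟩⟩

@[simp] theorem fact_comp_h {F G H : Factorisation f} (a : F ⟶ G) (b : G ⟶ H) :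
    (a ≫ b).h = a.h ≫ b.h := rfl

@[simp] theorem fact_id_h (F : Factorisation f) : (𝟙 F : F ⟶ F).h = 𝟙 F.mid := rfl

/-- The mid components of an isomorphism of factorisations give an isomorphism in `C`. -/
def factMidIso {F G : Factorisation f} (w : F ≅ G) : F.mid ≅ G.mid where
  hom := w.hom.h
  inv := w.inv.h
  hom_inv_id := by rw [← fact_comp_h, w.hom_inv_id]; rfl
  inv_hom_id := by rw [← fact_comp_h, w.inv_hom_id]; rfl

section Inv
variable {A : Type*} [CommRing A] {μ ν : ∀ ⦃x y : C⦄, (x ⟶ y) → A}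

theorem eq_ι_of_rel (hμ : ArrowInvariant μ) {F G : Factorisation f}
    (h : FactIsoRel f F G) : μ F.ι = μ G.ι := by
  obtain ⟨w⟩ := h
  exact hμ F.ι G.ι (Iso.refl x) (factMidIso w) (by simp [factMidIso, w.hom.ι_h])

theorem eq_π_of_rel (hμ : ArrowInvariant μ) {F G : Factorisation f}
    (h : FactIsoRel f F G) : μ F.π = μ G.π := by
  obtain ⟨w⟩ := h
  exact hμ F.π G.π (factMidIso w) (Iso.refl y) (by simp [factMidIso, w.hom.h_π])

end Inv
end Lemmas

section Units
variable {C : Type*} [Category C] {A : Type*} [CommRing A]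
  {μ ν : ∀ ⦃x y : C⦄, (x ⟶ y) → A}

theorem mobiusConv_delta_left (hC : IsMobiusCategory C) (hν : ArrowInvariant ν)
    {x y : C} (f : x ⟶ y) : mobiusConv (mobiusDelta C A) ν f = ν f := by
  classical
  have hsingle : ∀ q : Quot (FactIsoRel f),
      q ≠ Quot.mk _ (Factorisation.initial : Factorisation f) →
      mobiusDelta C A (Quot.out q).ι * ν (Quot.out q).π = 0 := by
    intro q hq
    by_cases h : IsIso (Quot.out q).ι
    · exfalso
      apply hq
      conv_lhs => rw [← Quot.out_eq q]
      refine factIsoRel_mk_eq.mpr (factIsoRel_of_homs hC ?_ ?_)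
      · exact Factorisation.Hom.mk (inv (Quot.out q).ι : (Quot.out q).mid ⟶ x) (by exact IsIso.hom_inv_id _)
          (by rw [Factorisation.initial_π]; exact (IsIso.inv_comp_eq (Quot.out q).ι).mpr (Quot.out q).ι_π.symm)
      · exact Factorisation.Hom.mk (Quot.out q).ι (by exact Category.id_comp _) (by exact (Quot.out q).ι_π)
    · simp [mobiusDelta, h]
  rw [show mobiusConv (mobiusDelta C A) ν f
      = ∑ᶠ q : Quot (FactIsoRel f), mobiusDelta C A (Quot.out q).ι * ν (Quot.out q).π from rfl,
    finsum_eq_single _ _ hsingle]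
  obtain ⟨w⟩ := factIsoRel_out_mk (f := f) Factorisation.initial
  have e1 : (Quot.out (Quot.mk (FactIsoRel f) Factorisation.initial)).ι ≫ w.hom.h = 𝟙 x := by
    simpa using w.hom.ι_h
  haveI : IsIso w.hom.h := show IsIso (factMidIso w).hom from inferInstance
  haveI : IsIso ((Quot.out (Quot.mk (FactIsoRel f) Factorisation.initial)).ι ≫ w.hom.h) := by
    rw [e1]; exact IsIso.id x
  haveI hι : IsIso (Quot.out (Quot.mk (FactIsoRel f) Factorisation.initial)).ι :=
    IsIso.of_isIso_comp_right _ w.hom.h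
  rw [eq_π_of_rel hν ⟨w⟩]
  simp [mobiusDelta, hι]; rfl

theorem mobiusConv_delta_right (hC : IsMobiusCategory C) (hμ : ArrowInvariant μ)
    {x y : C} (f : x ⟶ y) : mobiusConv μ (mobiusDelta C A) f = μ f := by
  classical
  have hsingle : ∀ q : Quot (FactIsoRel f),
      q ≠ Quot.mk _ (Factorisation.terminal : Factorisation f) →
      μ (Quot.out q).ι * mobiusDelta C A (Quot.out q).π = 0 := by
    intro q hq
    by_cases h : IsIso (Quot.out q).π
    · exfalso
      apply hq
      conv_lhs => rw [← Quot.out_eq q]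
      refine factIsoRel_mk_eq.mpr (factIsoRel_of_homs hC ?_ ?_)
      · exact Factorisation.Hom.mk (Quot.out q).π (by exact (Quot.out q).ι_π) (by exact Category.comp_id _)
      · exact Factorisation.Hom.mk (inv (Quot.out q).π : y ⟶ (Quot.out q).mid)
          (by rw [Factorisation.terminal_ι]; exact (IsIso.comp_inv_eq (Quot.out q).π).mpr (Quot.out q).ι_π.symm) (by exact IsIso.inv_hom_id (Quot.out q).π)
    · simp [mobiusDelta, h]
  rw [show mobiusConv μ (mobiusDelta C A) f
      = ∑ᶠ q : Quot (FactIsoRel f), μ (Quot.out q).ι * mobiusDelta C A (Quot.out q).π from rfl,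
    finsum_eq_single _ _ hsingle]
  obtain ⟨w⟩ := factIsoRel_out_mk (f := f) Factorisation.terminal
  have e1 : w.hom.h = (Quot.out (Quot.mk (FactIsoRel f) Factorisation.terminal)).π := by
    exact (Category.comp_id _).symm.trans w.hom.h_π
  haveI : IsIso w.hom.h := show IsIso (factMidIso w).hom from inferInstance
  haveI hπ : IsIso (Quot.out (Quot.mk (FactIsoRel f) Factorisation.terminal)).π := by
    rw [← e1]; assumption
  rw [eq_ι_of_rel hμ ⟨w⟩]
  simp [mobiusDelta, hπ]; rfl

end Units

section Transport
variable {C : Type*} [Category C] {x y x' y' : C} {f : x ⟶ y} {f' : x' ⟶ y'}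

/-- Transport a factorisation along an isomorphism of arrows. -/
@[simps]
def factTransport (ex : x ≅ x') (ey : y ≅ y') (hcomm : f ≫ ey.hom = ex.hom ≫ f')
    (F : Factorisation f) : Factorisation f' where
  mid := F.mid
  ι := ex.inv ≫ F.ι
  π := F.π ≫ ey.hom
  ι_π := by
    rw [Category.assoc,
      show F.ι ≫ F.π ≫ ey.hom = (F.ι ≫ F.π) ≫ ey.hom from (Category.assoc _ _ _).symm,
      F.ι_π, hcomm, ex.inv_hom_id_assoc]

theorem factTransport_rel (ex : x ≅ x') (ey : y ≅ y') (hcomm : f ≫ ey.hom = ex.hom ≫ f')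
    {F G : Factorisation f} (h : FactIsoRel f F G) :
    FactIsoRel f' (factTransport ex ey hcomm F) (factTransport ex ey hcomm G) := by
  obtain ⟨w⟩ := h
  refine ⟨⟨Factorisation.Hom.mk w.hom.h ?_ ?_, Factorisation.Hom.mk w.inv.h ?_ ?_, ?_, ?_⟩⟩
  · show (ex.inv ≫ F.ι) ≫ w.hom.h = ex.inv ≫ G.ι
    rw [Category.assoc, w.hom.ι_h]
  · show w.hom.h ≫ G.π ≫ ey.hom = F.π ≫ ey.hom
    rw [← Category.assoc, w.hom.h_π]
  · show (ex.inv ≫ G.ι) ≫ w.inv.h = ex.inv ≫ F.ι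
    rw [Category.assoc, w.inv.ι_h]
  · show w.inv.h ≫ F.π ≫ ey.hom = G.π ≫ ey.hom
    rw [← Category.assoc, w.inv.h_π]
  · apply Factorisation.Hom.ext
    exact (factMidIso w).hom_inv_id
  · apply Factorisation.Hom.ext
    exact (factMidIso w).inv_hom_id

theorem hcomm_symm (ex : x ≅ x') (ey : y ≅ y') (hcomm : f ≫ ey.hom = ex.hom ≫ f') :
    f' ≫ ey.symm.hom = ex.symm.hom ≫ f := by
  have : f' = ex.inv ≫ f ≫ ey.hom := by rw [Iso.eq_inv_comp, hcomm]
  rw [this]; simp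

/-- Transport of iso classes of factorisations along an isomorphism of arrows. -/
def factTransportEquiv (ex : x ≅ x') (ey : y ≅ y') (hcomm : f ≫ ey.hom = ex.hom ≫ f') :
    Quot (FactIsoRel f) ≃ Quot (FactIsoRel f') where
  toFun := Quot.lift (fun F => Quot.mk _ (factTransport ex ey hcomm F))
    (fun _ _ h => Quot.sound (factTransport_rel ex ey hcomm h))
  invFun := Quot.lift (fun F => Quot.mk _ (factTransport ex.symm ey.symm
      (hcomm_symm ex ey hcomm) F))
    (fun _ _ h => Quot.sound (factTransport_rel _ _ _ h))
  left_inv := by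
    intro q
    induction q using Quot.ind with
    | _ F =>
      apply Quot.sound
      refine ⟨⟨Factorisation.Hom.mk (𝟙 F.mid) ?_ ?_, Factorisation.Hom.mk (𝟙 F.mid) ?_ ?_,
        Factorisation.Hom.ext (by exact Category.comp_id _), Factorisation.Hom.ext (by exact Category.comp_id _)⟩⟩ <;> simp [factTransport]
  right_inv := by
    intro q
    induction q using Quot.ind with
    | _ F =>
      apply Quot.sound
      refine ⟨⟨Factorisation.Hom.mk (𝟙 F.mid) ?_ ?_, Factorisation.Hom.mk (𝟙 F.mid) ?_ ?_,
        Factorisation.Hom.ext (by exact Category.comp_id _), Factorisation.Hom.ext (by exact Category.comp_id _)⟩⟩ <;> simp [factTransport]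

variable {A : Type*} [CommRing A]

theorem mobiusConv_invariant {μ ν : ∀ ⦃x y : C⦄, (x ⟶ y) → A}
    (hμ : ArrowInvariant μ) (hν : ArrowInvariant ν) :
    ArrowInvariant (mobiusConv μ ν) := by
  intro x y x' y' f f' ex ey hcomm
  show (∑ᶠ q : Quot (FactIsoRel f), μ (Quot.out q).ι * ν (Quot.out q).π)
    = ∑ᶠ q : Quot (FactIsoRel f'), μ (Quot.out q).ι * ν (Quot.out q).π
  refine finsum_eq_of_bijective (factTransportEquiv ex ey hcomm)
    (factTransportEquiv ex ey hcomm).bijective (fun q => ?_)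
  have hq : factTransportEquiv ex ey hcomm q
      = Quot.mk _ (factTransport ex ey hcomm (Quot.out q)) := by
    conv_lhs => rw [← Quot.out_eq q]
    rfl
  have hrel := factIsoRel_out_mk (f := f') (factTransport ex ey hcomm (Quot.out q))
  rw [hq]
  rw [eq_ι_of_rel hμ hrel, eq_π_of_rel hν hrel]
  congr 1
  · exact hμ _ _ ex (Iso.refl _) (by simp [factTransport])
  · exact hν _ _ (Iso.refl _) ey (by simp [factTransport])

end Transport

section Linearity
variable {C : Type*} [Category C] {A : Type*} [CommRing A]

theorem mobiusConv_def (μ ν : ∀ ⦃x y : C⦄, (x ⟶ y) → A) {x y : C} (f : x ⟶ y) :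
    mobiusConv μ ν f = ∑ᶠ q : Quot (FactIsoRel f), μ (Quot.out q).ι * ν (Quot.out q).π := rfl

theorem mobiusConv_sum_right (hC : IsMobiusCategory C) (μ : ∀ ⦃x y : C⦄, (x ⟶ y) → A)
    (s : Finset ℕ) (c : ℕ → A) (ρ : ℕ → ∀ ⦃x y : C⦄, (x ⟶ y) → A) {x y : C} (f : x ⟶ y) :
    mobiusConv μ (fun _ _ g => ∑ k ∈ s, c k * ρ k g) f
      = ∑ k ∈ s, c k * mobiusConv μ (ρ k) f := by
  haveI := mobius_finite_quot (f := f) hC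
  haveI := Fintype.ofFinite (Quot (FactIsoRel f))
  simp only [mobiusConv_def, finsum_eq_sum_of_fintype, Finset.mul_sum]
  rw [Finset.sum_comm]
  exact Finset.sum_congr rfl fun k _ => Finset.sum_congr rfl fun q _ => by ring

theorem mobiusConv_sum_left (hC : IsMobiusCategory C) (μ : ∀ ⦃x y : C⦄, (x ⟶ y) → A)
    (s : Finset ℕ) (c : ℕ → A) (ρ : ℕ → ∀ ⦃x y : C⦄, (x ⟶ y) → A) {x y : C} (f : x ⟶ y) :
    mobiusConv (fun _ _ g => ∑ k ∈ s, c k * ρ k g) μ f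
      = ∑ k ∈ s, c k * mobiusConv (ρ k) μ f := by
  haveI := mobius_finite_quot (f := f) hC
  haveI := Fintype.ofFinite (Quot (FactIsoRel f))
  simp only [mobiusConv_def, finsum_eq_sum_of_fintype, Finset.sum_mul, Finset.mul_sum]
  rw [Finset.sum_comm]
  exact Finset.sum_congr rfl fun k _ => Finset.sum_congr rfl fun q _ => by ring

theorem mobiusConv_add_left (hC : IsMobiusCategory C)
    (μ₁ μ₂ ν : ∀ ⦃x y : C⦄, (x ⟶ y) → A) {x y : C} (f : x ⟶ y) :
    mobiusConv (fun _ _ g => μ₁ g + μ₂ g) ν f = mobiusConv μ₁ ν f + mobiusConv μ₂ ν f := by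
  haveI := mobius_finite_quot (f := f) hC
  haveI := Fintype.ofFinite (Quot (FactIsoRel f))
  simp only [mobiusConv_def, finsum_eq_sum_of_fintype, add_mul, Finset.sum_add_distrib]

end Linearity

section Nilpotent
variable {C : Type*} [Category C] {A : Type*} [CommRing A]

theorem chain_of_pow_ne_zero {η : ∀ ⦃x y : C⦄, (x ⟶ y) → A}
    (hη0 : ∀ ⦃x y : C⦄ (f : x ⟶ y), IsIso f → η f = 0) :
    ∀ (m : ℕ) ⦃x y : C⦄ (f : x ⟶ y), mobiusConvPow η m f ≠ 0 →
      ∃ F : Fin (m + 1) ⥤ C, F.obj 0 = x ∧ ∀ i : Fin m, ¬ IsIso (chainStep F i) := by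
  intro m
  induction m with
  | zero =>
    intro x y f _
    exact ⟨(Functor.const _).obj x, rfl, fun i => i.elim0⟩
  | succ m ih =>
    intro x y f hf
    have hex : ∃ q : Quot (FactIsoRel f),
        η (Quot.out q).ι * mobiusConvPow η m (Quot.out q).π ≠ 0 := by
      by_contra hc
      push_neg at hc
      exact hf (finsum_eq_zero_of_forall_eq_zero hc)
    obtain ⟨q, hq⟩ := hex
    have h1 : ¬ IsIso (Quot.out q).ι := fun hi => left_ne_zero_of_mul hq (hη0 _ hi)
    obtain ⟨F, hF0, hFsteps⟩ := ih (Quot.out q).π (right_ne_zero_of_mul hq)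
    let obj : Fin (m + 2) → C := fun i => Fin.cases x (fun j => F.obj j) i
    let ms : ∀ i : Fin (m + 1), obj i.castSucc ⟶ obj i.succ := fun i =>
      Fin.cases (motive := fun i => obj i.castSucc ⟶ obj i.succ)
        ((Quot.out q).ι ≫ eqToHom hF0.symm) (fun j => chainStep F j) i
    let G := ComposableArrows.mkOfObjOfMapSucc obj ms
    have hstep : ∀ i : Fin (m + 1), chainStep G i = ms i := fun i =>
      ComposableArrows.mkOfObjOfMapSucc_map_succ obj ms i.val i.isLt
    refine ⟨G, ?_, ?_⟩
    · exact ComposableArrows.mkOfObjOfMapSucc_obj obj ms 0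
    · intro i
      rw [hstep]
      induction i using Fin.cases with
      | zero =>
        rw [show ms 0 = (Quot.out q).ι ≫ eqToHom hF0.symm from Fin.cases_zero]
        intro hiso
        haveI : IsIso ((Quot.out q).ι ≫ eqToHom hF0.symm) := hiso
        exact h1 (IsIso.of_isIso_comp_right _ (eqToHom hF0.symm))
      | succ j =>
        rw [show ms j.succ = chainStep F j from Fin.cases_succ j]
        exact hFsteps j

end Nilpotent

section Assoc
variable {C : Type*} [Category C]

/-- Two-step factorisations of a morphism. -/
structure Fact2 {x y : C} (f : x ⟶ y) where
  m₁ : C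
  m₂ : C
  a : x ⟶ m₁
  b : m₁ ⟶ m₂
  c : m₂ ⟶ y
  w : a ≫ b ≫ c = f

/-- Isomorphism relation on two-step factorisations. -/
def Fact2Rel {x y : C} (f : x ⟶ y) : Fact2 f → Fact2 f → Prop := fun S T =>
  ∃ (u : S.m₁ ≅ T.m₁) (v : S.m₂ ≅ T.m₂),
    S.a ≫ u.hom = T.a ∧ S.b ≫ v.hom = u.hom ≫ T.b ∧ v.hom ≫ T.c = S.c

theorem fact2Rel_equivalence {x y : C} (f : x ⟶ y) : Equivalence (Fact2Rel f) := by
  constructor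
  · exact fun S => ⟨Iso.refl _, Iso.refl _, by simp, by simp, by simp⟩
  · rintro S T ⟨u, v, h1, h2, h3⟩
    refine ⟨u.symm, v.symm, ?_, ?_, ?_⟩
    · rw [Iso.symm_hom, ← h1]; simp
    · rw [Iso.symm_hom, Iso.symm_hom, Iso.comp_inv_eq, Category.assoc, h2,
        Iso.inv_hom_id_assoc]
    · rw [Iso.symm_hom, Iso.inv_comp_eq]
      exact h3.symm
  · rintro S T U ⟨u, v, h1, h2, h3⟩ ⟨u', v', h1', h2', h3'⟩
    refine ⟨u.trans u', v.trans v', ?_, ?_, ?_⟩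
    · simp [← Category.assoc, h1, h1']
    · simp only [Iso.trans_hom, ← Category.assoc, h2]
      simp only [Category.assoc, h2']
    · simp [Category.assoc, h3', h3]

theorem fact2Rel_mk_eq {x y : C} {f : x ⟶ y} {S T : Fact2 f} :
    Quot.mk (Fact2Rel f) S = Quot.mk (Fact2Rel f) T ↔ Fact2Rel f S T := by
  rw [Quot.eq]
  exact (fact2Rel_equivalence f).eqvGen_iff

theorem fact2Rel_out_mk {x y : C} {f : x ⟶ y} (S : Fact2 f) :
    Fact2Rel f (Quot.out (Quot.mk (Fact2Rel f) S)) S := by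
  rw [← fact2Rel_mk_eq, Quot.out_eq]

variable {A : Type*} [CommRing A] {μ ν ρ : ∀ ⦃x y : C⦄, (x ⟶ y) → A}

theorem fact2_term_eq (hμ : ArrowInvariant μ) (hν : ArrowInvariant ν) (hρ : ArrowInvariant ρ)
    {x y : C} {f : x ⟶ y} {S T : Fact2 f} (h : Fact2Rel f S T) :
    μ S.a * ν S.b * ρ S.c = μ T.a * ν T.b * ρ T.c := by
  obtain ⟨u, v, h1, h2, h3⟩ := h
  rw [hμ S.a T.a (Iso.refl x) u (by simpa using h1),
    hν S.b T.b u v h2, hρ S.c T.c v (Iso.refl y) (by simpa using h3.symm)]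

/-- The triple associated to a factorisation of `f` and a factorisation of its left leg. -/
noncomputable def lTriple {x y : C} {f : x ⟶ y}
    (p : Σ q : Quot (FactIsoRel f), Quot (FactIsoRel (Quot.out q).ι)) : Fact2 f where
  m₁ := (Quot.out p.2).mid
  m₂ := (Quot.out p.1).mid
  a := (Quot.out p.2).ι
  b := (Quot.out p.2).π
  c := (Quot.out p.1).π
  w := by rw [← Category.assoc, (Quot.out p.2).ι_π, (Quot.out p.1).ι_π]

/-- The triple associated to a factorisation of `f` and a factorisation of its right leg. -/
noncomputable def rTriple {x y : C} {f : x ⟶ y}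
    (p : Σ q : Quot (FactIsoRel f), Quot (FactIsoRel (Quot.out q).π)) : Fact2 f where
  m₁ := (Quot.out p.1).mid
  m₂ := (Quot.out p.2).mid
  a := (Quot.out p.1).ι
  b := (Quot.out p.2).ι
  c := (Quot.out p.2).π
  w := by rw [(Quot.out p.2).ι_π, (Quot.out p.1).ι_π]

theorem lTriple_bijective (hC : IsMobiusCategory C) {x y : C} {f : x ⟶ y} :
    Function.Bijective (fun p => Quot.mk (Fact2Rel f) (lTriple p) :
      (Σ q : Quot (FactIsoRel f), Quot (FactIsoRel (Quot.out q).ι)) → Quot (Fact2Rel f)) := by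
  constructor
  · rintro ⟨q, r⟩ ⟨q', r'⟩ hp
    obtain ⟨u, v, h1, h2, h3⟩ := fact2Rel_mk_eq.mp hp
    change (Quot.out r).mid ≅ (Quot.out r').mid at u
    change (Quot.out q).mid ≅ (Quot.out q').mid at v
    replace h1 : (Quot.out r).ι ≫ u.hom = (Quot.out r').ι := h1
    replace h2 : (Quot.out r).π ≫ v.hom = u.hom ≫ (Quot.out r').π := h2
    replace h3 : v.hom ≫ (Quot.out q').π = (Quot.out q).π := h3
    have hion : (Quot.out q).ι ≫ v.hom = (Quot.out q').ι := by
      conv_lhs => rw [← (Quot.out r).ι_π]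
      conv_rhs => rw [← (Quot.out r').ι_π]
      rw [Category.assoc, h2, ← Category.assoc, h1]
    have hqq : q = q' := by
      rw [← Quot.out_eq q, ← Quot.out_eq q']
      refine factIsoRel_mk_eq.mpr (factIsoRel_of_homs hC
        (Factorisation.Hom.mk v.hom hion h3) (Factorisation.Hom.mk v.inv ?_ ?_))
      · rw [Iso.comp_inv_eq, hion]
      · rw [Iso.inv_comp_eq]
        exact h3.symm
    subst hqq
    have hv := @Subsingleton.elim (Quot.out q ⟶ Quot.out q)
      (mobius_hom_subsingleton hC _ _) (Factorisation.Hom.mk v.hom hion h3) (𝟙 _)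
    have hv' : v.hom = 𝟙 (Quot.out q).mid := congrArg Factorisation.Hom.h hv
    have hrr : r = r' := by
      rw [← Quot.out_eq r, ← Quot.out_eq r']
      refine factIsoRel_mk_eq.mpr (factIsoRel_of_homs hC
        (Factorisation.Hom.mk u.hom h1 ?_) (Factorisation.Hom.mk u.inv ?_ ?_))
      · rw [← h2, hv', Category.comp_id]
      · rw [Iso.comp_inv_eq, h1]
      · rw [Iso.inv_comp_eq, ← h2, hv', Category.comp_id]
    rw [hrr]
  · intro t
    set T := Quot.out t with hT
    let Q0 : Factorisation f := ⟨T.m₂, T.a ≫ T.b, T.c, by rw [Category.assoc, T.w]⟩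
    set q : Quot (FactIsoRel f) := Quot.mk _ Q0 with hq
    obtain ⟨w⟩ := factIsoRel_out_mk (f := f) Q0
    have hwi : w.inv.h ≫ w.hom.h = 𝟙 _ := (factMidIso w).inv_hom_id
    have hpf : T.a ≫ T.b ≫ w.inv.h = (Quot.out q).ι := by
      rw [← Category.assoc]
      exact w.inv.ι_h
    set r : Quot (FactIsoRel (Quot.out q).ι) :=
      Quot.mk _ ⟨T.m₁, T.a, T.b ≫ w.inv.h, hpf⟩ with hr
    obtain ⟨wr⟩ := factIsoRel_out_mk (f := (Quot.out q).ι) ⟨T.m₁, T.a, T.b ≫ w.inv.h, hpf⟩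
    refine ⟨⟨q, r⟩, ?_⟩
    show Quot.mk _ (lTriple ⟨q, r⟩) = t
    rw [← Quot.out_eq t]
    refine fact2Rel_mk_eq.mpr ⟨factMidIso wr, factMidIso w, ?_, ?_, ?_⟩
    · exact wr.hom.ι_h
    · show (Quot.out r).π ≫ w.hom.h = wr.hom.h ≫ T.b
      rw [← wr.hom.h_π]
      simp [Category.assoc, hwi]
      exact congrArg (fun g => wr.hom.h ≫ g) (Category.comp_id T.b)
    · exact w.hom.h_π

theorem rTriple_bijective (hC : IsMobiusCategory C) {x y : C} {f : x ⟶ y} :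
    Function.Bijective (fun p => Quot.mk (Fact2Rel f) (rTriple p) :
      (Σ q : Quot (FactIsoRel f), Quot (FactIsoRel (Quot.out q).π)) → Quot (Fact2Rel f)) := by
  constructor
  · rintro ⟨q, s⟩ ⟨q', s'⟩ hp
    obtain ⟨u, v, h1, h2, h3⟩ := fact2Rel_mk_eq.mp hp
    change (Quot.out q).mid ≅ (Quot.out q').mid at u
    change (Quot.out s).mid ≅ (Quot.out s').mid at v
    replace h1 : (Quot.out q).ι ≫ u.hom = (Quot.out q').ι := h1
    replace h2 : (Quot.out s).ι ≫ v.hom = u.hom ≫ (Quot.out s').ι := h2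
    replace h3 : v.hom ≫ (Quot.out s').π = (Quot.out s).π := h3
    have hpio : u.hom ≫ (Quot.out q').π = (Quot.out q).π := by
      conv_lhs => rw [← (Quot.out s').ι_π]
      conv_rhs => rw [← (Quot.out s).ι_π]
      rw [← Category.assoc, ← h2, Category.assoc, h3]
    have hqq : q = q' := by
      rw [← Quot.out_eq q, ← Quot.out_eq q']
      refine factIsoRel_mk_eq.mpr (factIsoRel_of_homs hC
        (Factorisation.Hom.mk u.hom h1 hpio) (Factorisation.Hom.mk u.inv ?_ ?_))
      · rw [Iso.comp_inv_eq, h1]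
      · rw [Iso.inv_comp_eq]
        exact hpio.symm
    subst hqq
    have hu := @Subsingleton.elim (Quot.out q ⟶ Quot.out q)
      (mobius_hom_subsingleton hC _ _) (Factorisation.Hom.mk u.hom h1 hpio) (𝟙 _)
    have hu' : u.hom = 𝟙 (Quot.out q).mid := congrArg Factorisation.Hom.h hu
    have hss : s = s' := by
      rw [← Quot.out_eq s, ← Quot.out_eq s']
      refine factIsoRel_mk_eq.mpr (factIsoRel_of_homs hC
        (Factorisation.Hom.mk v.hom ?_ h3) (Factorisation.Hom.mk v.inv ?_ ?_))
      · rw [h2, hu']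
        exact Category.id_comp _
      · rw [Iso.comp_inv_eq, h2, hu']
        exact (Category.id_comp _).symm
      · rw [Iso.inv_comp_eq]
        exact h3.symm
    rw [hss]
  · intro t
    set T := Quot.out t with hT
    let Q1 : Factorisation f := ⟨T.m₁, T.a, T.b ≫ T.c, T.w⟩
    set q : Quot (FactIsoRel f) := Quot.mk _ Q1 with hq
    obtain ⟨w⟩ := factIsoRel_out_mk (f := f) Q1
    have hpf : (w.hom.h ≫ T.b) ≫ T.c = (Quot.out q).π := by
      rw [Category.assoc]
      exact w.hom.h_π
    set s : Quot (FactIsoRel (Quot.out q).π) :=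
      Quot.mk _ ⟨T.m₂, w.hom.h ≫ T.b, T.c, hpf⟩ with hs
    obtain ⟨ws⟩ := factIsoRel_out_mk (f := (Quot.out q).π) ⟨T.m₂, w.hom.h ≫ T.b, T.c, hpf⟩
    refine ⟨⟨q, s⟩, ?_⟩
    show Quot.mk _ (rTriple ⟨q, s⟩) = t
    rw [← Quot.out_eq t]
    refine fact2Rel_mk_eq.mpr ⟨factMidIso w, factMidIso ws, ?_, ?_, ?_⟩
    · exact w.hom.ι_h
    · exact ws.hom.ι_h
    · exact ws.hom.h_π

theorem mobiusConv_assoc (hC : IsMobiusCategory C)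
    (hμ : ArrowInvariant μ) (hν : ArrowInvariant ν) (hρ : ArrowInvariant ρ)
    {x y : C} (f : x ⟶ y) :
    mobiusConv (mobiusConv μ ν) ρ f = mobiusConv μ (mobiusConv ν ρ) f := by
  haveI : Finite (Quot (FactIsoRel f)) := mobius_finite_quot hC
  haveI : Fintype (Quot (FactIsoRel f)) := Fintype.ofFinite _
  haveI : ∀ q : Quot (FactIsoRel f), Fintype (Quot (FactIsoRel (Quot.out q).ι)) :=
    fun q => @Fintype.ofFinite _ (mobius_finite_quot hC)
  haveI : ∀ q : Quot (FactIsoRel f), Fintype (Quot (FactIsoRel (Quot.out q).π)) :=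
    fun q => @Fintype.ofFinite _ (mobius_finite_quot hC)
  have lhs_eq : mobiusConv (mobiusConv μ ν) ρ f
      = ∑ᶠ t : Quot (Fact2Rel f),
          μ (Quot.out t).a * ν (Quot.out t).b * ρ (Quot.out t).c := by
    rw [← finsum_eq_of_bijective _ (lTriple_bijective hC (f := f))
      (fun p => (fact2_term_eq hμ hν hρ (fact2Rel_out_mk (lTriple p))).symm)]
    rw [finsum_eq_sum_of_fintype, mobiusConv_def, finsum_eq_sum_of_fintype]
    simp only [mobiusConv_def, finsum_eq_sum_of_fintype, Finset.sum_mul]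
    rw [← Finset.univ_sigma_univ, Finset.sum_sigma]
    rfl
  have rhs_eq : mobiusConv μ (mobiusConv ν ρ) f
      = ∑ᶠ t : Quot (Fact2Rel f),
          μ (Quot.out t).a * ν (Quot.out t).b * ρ (Quot.out t).c := by
    rw [← finsum_eq_of_bijective _ (rTriple_bijective hC (f := f))
      (fun p => (fact2_term_eq hμ hν hρ (fact2Rel_out_mk (rTriple p))).symm)]
    rw [finsum_eq_sum_of_fintype, mobiusConv_def, finsum_eq_sum_of_fintype]
    simp only [mobiusConv_def, finsum_eq_sum_of_fintype, Finset.mul_sum]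
    rw [← Finset.univ_sigma_univ, Finset.sum_sigma]
    refine Finset.sum_congr rfl fun q _ => Finset.sum_congr rfl fun s _ => ?_
    rw [mul_assoc]
    rfl
  rw [lhs_eq, rhs_eq]

end Assoc

section Final
variable {C : Type*} [Category C] {A : Type*} [CommRing A]

theorem mobiusConv_congr_left {μ₁ μ₂ ν : ∀ ⦃x y : C⦄, (x ⟶ y) → A}
    (h : ∀ ⦃x y : C⦄ (g : x ⟶ y), μ₁ g = μ₂ g) {x y : C} (f : x ⟶ y) :
    mobiusConv μ₁ ν f = mobiusConv μ₂ ν f := by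
  simp only [mobiusConv_def]
  exact finsum_congr fun q => by rw [h]

theorem mobiusConv_congr_right {μ ν₁ ν₂ : ∀ ⦃x y : C⦄, (x ⟶ y) → A}
    (h : ∀ ⦃x y : C⦄ (g : x ⟶ y), ν₁ g = ν₂ g) {x y : C} (f : x ⟶ y) :
    mobiusConv μ ν₁ f = mobiusConv μ ν₂ f := by
  simp only [mobiusConv_def]
  exact finsum_congr fun q => by rw [h]

theorem mobiusConv_add_right (hC : IsMobiusCategory C)
    (μ ν₁ ν₂ : ∀ ⦃x y : C⦄, (x ⟶ y) → A) {x y : C} (f : x ⟶ y) :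
    mobiusConv μ (fun _ _ g => ν₁ g + ν₂ g) f = mobiusConv μ ν₁ f + mobiusConv μ ν₂ f := by
  haveI := mobius_finite_quot (f := f) hC
  haveI := Fintype.ofFinite (Quot (FactIsoRel f))
  simp only [mobiusConv_def, finsum_eq_sum_of_fintype, mul_add, Finset.sum_add_distrib]

theorem mobiusDelta_invariant : ArrowInvariant (mobiusDelta C A) := by
  intro x y x' y' f f' ex ey hcomm
  have hf' : f' = ex.inv ≫ f ≫ ey.hom := by rw [Iso.eq_inv_comp, hcomm]
  have : IsIso f ↔ IsIso f' := by
    constructor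
    · intro h
      rw [hf']
      infer_instance
    · intro h
      have : f = ex.hom ≫ f' ≫ ey.inv := by rw [hf']; simp
      rw [this]
      infer_instance
  simp only [mobiusDelta]
  split_ifs with h1 h2 h2
  · rfl
  · exact absurd (this.mp h1) h2
  · exact absurd (this.mpr h2) h1
  · rfl

theorem mobiusConvPow_invariant {η : ∀ ⦃x y : C⦄, (x ⟶ y) → A} (hη : ArrowInvariant η) :
    ∀ k, ArrowInvariant (mobiusConvPow η k)
  | 0 => mobiusDelta_invariant
  | k + 1 => mobiusConv_invariant hη (mobiusConvPow_invariant hη k)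

theorem mobiusConvPow_conv_comm (hC : IsMobiusCategory C)
    {η : ∀ ⦃x y : C⦄, (x ⟶ y) → A} (hη : ArrowInvariant η) :
    ∀ (k : ℕ) ⦃x y : C⦄ (f : x ⟶ y),
      mobiusConv (mobiusConvPow η k) η f = mobiusConvPow η (k + 1) f := by
  intro k
  induction k with
  | zero =>
    intro x y f
    show mobiusConv (mobiusDelta C A) η f = mobiusConv η (mobiusDelta C A) f
    rw [mobiusConv_delta_left hC hη, mobiusConv_delta_right hC hη]
  | succ k ih =>
    intro x y f
    show mobiusConv (mobiusConv η (mobiusConvPow η k)) η f = mobiusConv η _ f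
    rw [mobiusConv_assoc hC hη (mobiusConvPow_invariant hη k) hη]
    exact mobiusConv_congr_right (fun _ _ g => ih g) f

end Final

/-- If every chain of composable non-isomorphisms in a Möbius category `C` has length at most
`n`, then any `η ∈ A⟦C⟧` vanishing on isomorphisms satisfies `η^{*(n+1)} = 0`; consequently
every `μ = δ + η` with `η` vanishing on isomorphisms is convolution-invertible with inverse
`∑_{k=0}^{n} (−1)^k η^{*k}`. -/
theorem mobius_nilpotent_and_geometric_inverse {C : Type*} [Category C] {A : Type*} [CommRing A]
    (hC : IsMobiusCategory C) (n : ℕ)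
    (hbound : ∀ (m : ℕ) (F : Fin (m + 1) ⥤ C),
      (∀ i : Fin m, ¬ IsIso (chainStep F i)) → m ≤ n)
    (η : ∀ ⦃x y : C⦄, (x ⟶ y) → A) (hη : ArrowInvariant η)
    (hη0 : ∀ ⦃x y : C⦄ (f : x ⟶ y), IsIso f → η f = 0) :
    (∀ ⦃x y : C⦄ (f : x ⟶ y), mobiusConvPow η (n + 1) f = 0) ∧
    (∀ μ : ∀ ⦃x y : C⦄, (x ⟶ y) → A,
      (∀ ⦃x y : C⦄ (f : x ⟶ y), μ f = mobiusDelta C A f + η f) →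
      ∀ ⦃x y : C⦄ (f : x ⟶ y),
        mobiusConv μ (fun _ _ g => ∑ k ∈ Finset.range (n + 1),
          (-1 : A) ^ k * mobiusConvPow η k g) f = mobiusDelta C A f ∧
        mobiusConv (fun _ _ g => ∑ k ∈ Finset.range (n + 1),
          (-1 : A) ^ k * mobiusConvPow η k g) μ f = mobiusDelta C A f) := by
  have hnil : ∀ ⦃x y : C⦄ (f : x ⟶ y), mobiusConvPow η (n + 1) f = 0 := by
    intro x y f
    by_contra h
    obtain ⟨F, _, hsteps⟩ := chain_of_pow_ne_zero hη0 (n + 1) f h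
    exact absurd (hbound (n + 1) F hsteps) (by omega)
  refine ⟨hnil, ?_⟩
  intro μ hμδ x y f
  set S : ∀ ⦃x y : C⦄, (x ⟶ y) → A := fun _ _ g => ∑ k ∈ Finset.range (n + 1),
    (-1 : A) ^ k * mobiusConvPow η k g with hS
  have hSinv : ArrowInvariant S := by
    intro x y x' y' g g' ex ey hcomm
    exact Finset.sum_congr rfl fun k _ => by
      rw [mobiusConvPow_invariant hη k g g' ex ey hcomm]
  have htel : (∑ k ∈ Finset.range (n + 1), (-1 : A) ^ k * mobiusConvPow η k f)
      + (∑ k ∈ Finset.range (n + 1), (-1 : A) ^ k * mobiusConvPow η (k + 1) f)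
      = mobiusDelta C A f := by
    rw [← Finset.sum_add_distrib]
    have : ∀ k ∈ Finset.range (n + 1),
        (-1 : A) ^ k * mobiusConvPow η k f + (-1 : A) ^ k * mobiusConvPow η (k + 1) f
        = (fun k => (-1 : A) ^ k * mobiusConvPow η k f) k
          - (fun k => (-1 : A) ^ k * mobiusConvPow η k f) (k + 1) := by
      intro k _
      simp only [pow_succ]
      ring
    rw [Finset.sum_congr rfl this, Finset.sum_range_sub']
    show ((-1 : A) ^ 0 * mobiusConvPow η 0 f) - ((-1 : A) ^ (n + 1) * mobiusConvPow η (n + 1) f)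
      = mobiusDelta C A f
    rw [hnil f]
    simp [mobiusConvPow]
  constructor
  · rw [mobiusConv_congr_left (fun _ _ g => hμδ g) f,
      show (fun (_ _ : C) g => mobiusDelta C A g + η g)
        = fun (_ _ : C) (g : _ ⟶ _) => mobiusDelta C A g + η g from rfl]
    rw [mobiusConv_add_left hC (mobiusDelta C A) η S f]
    rw [mobiusConv_delta_left hC hSinv]
    rw [mobiusConv_sum_right hC η (Finset.range (n + 1)) (fun k => (-1 : A) ^ k)
      (fun k => mobiusConvPow η k) f]
    rw [← htel]
    congr 1
  · rw [mobiusConv_congr_right (fun _ _ g => hμδ g) f]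
    rw [mobiusConv_add_right hC S (mobiusDelta C A) η f]
    rw [mobiusConv_delta_right hC hSinv]
    rw [mobiusConv_sum_left hC η (Finset.range (n + 1)) (fun k => (-1 : A) ^ k)
      (fun k => mobiusConvPow η k) f]
    rw [← htel]
    congr 1
    exact Finset.sum_congr rfl fun k _ => by
      rw [mobiusConvPow_conv_comm hC hη k f]
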